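/- arXiv:1004.1734 — 5 statements merged into one kernel-verified Lean document; each statement's English description precedes it below -/
import Mathlib

section
/- For Λ ≥ 1, B_Λ = (2/(3π)) log Λ - 5/(9π) + (2 log 2)/(3π) + O(1/Λ²) as Λ → ∞; in particular lim_{Λ→∞}(B_Λ - (2/(3π)) log Λ) = -5/(9π) + (2 log 2)/(3π). -/
open Real

/-- `E x = √(1+x²)`. -/
noncomputable def E (x : ℝ) : ℝ := Real.sqrt (1 + x ^ 2)

/-- `Z_Λ(r)`, extended by continuity at `r = 0`. -/
noncomputable def ZL (Λ r : ℝ) : ℝ :=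
  if r = 0 then Λ / E Λ else (E Λ - E (Λ - r)) / r

/-- The cut-off function `B_Λ(r)`. -/
noncomputable def BL (Λ r : ℝ) : ℝ :=
  1 / π * (∫ z in (0:ℝ)..ZL Λ r,
      (z ^ 2 - z ^ 4 / 3) / ((1 - z ^ 2) * (1 + r ^ 2 * (1 - z ^ 2) / 4)))
    + r / (2 * π) * (∫ z in (0:ℝ)..ZL Λ r, (z - z ^ 3 / 3) / (E Λ - r * z / 2))

/-- The constant `B_Λ = B_Λ(0) = (1/π)∫₀^{Λ/E(Λ)} (z² - z⁴/3)/(1-z²) dz`. -/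
noncomputable def BC (Λ : ℝ) : ℝ := BL Λ 0

/-- The cut-off Uehling multiplier `U_Λ`. -/
noncomputable def UL (Λ r : ℝ) : ℝ :=
  if 0 ≤ r ∧ r ≤ 2 * Λ then BC Λ - BL Λ r else 0

/-- The Uehling multiplier `U`. -/
noncomputable def U (r : ℝ) : ℝ :=
  r ^ 2 / (4 * π) * ∫ z in (0:ℝ)..1, (z ^ 2 - z ^ 4 / 3) / (1 + r ^ 2 * (1 - z ^ 2) / 4)

/-- FTC evaluation of the core integral. -/
lemma core_integral (t : ℝ) (ht0 : 0 ≤ t) (ht1 : t < 1) :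
    (∫ z in (0:ℝ)..t, (z ^ 2 - z ^ 4 / 3) / (1 - z ^ 2))
      = t ^ 3 / 9 - 2 * t / 3 + (Real.log (1 + t) - Real.log (1 - t)) / 3 := by
  have key : ∀ z ∈ Set.uIcc (0:ℝ) t,
      HasDerivAt (fun z => z ^ 3 / 9 - 2 * z / 3 + (Real.log (1 + z) - Real.log (1 - z)) / 3)
        ((z ^ 2 - z ^ 4 / 3) / (1 - z ^ 2)) z := by
    intro z hz
    rw [Set.uIcc_of_le ht0] at hz
    have hz0 : 0 ≤ z := hz.1
    have hz1 : z < 1 := lt_of_le_of_lt hz.2 ht1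
    have h1 : (1:ℝ) + z ≠ 0 := by linarith
    have h2 : (1:ℝ) - z ≠ 0 := by linarith
    have h3 : (1:ℝ) - z ^ 2 ≠ 0 := by nlinarith
    have d1 : HasDerivAt (fun z : ℝ => Real.log (1 + z)) (1 / (1 + z)) z := by
      have := ((hasDerivAt_id z).const_add 1).log h1
      simpa using this
    have d2 : HasDerivAt (fun z : ℝ => Real.log (1 - z)) (-1 / (1 - z)) z := by
      have := ((hasDerivAt_id z).const_sub 1).log h2
      simpa using this
    have d3 : HasDerivAt (fun z : ℝ => z ^ 3 / 9 - 2 * z / 3)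
        (3 * z ^ 2 / 9 - 2 / 3) z := by
      have := ((hasDerivAt_pow 3 z).div_const 9).sub
        (((hasDerivAt_id z).const_mul 2).div_const 3)
      exact this.congr_deriv (by norm_num)
    have := d3.add (((d1.sub d2).div_const 3))
    refine this.congr_deriv ?_
    field_simp
    ring
  have hint : IntervalIntegrable (fun z => (z ^ 2 - z ^ 4 / 3) / (1 - z ^ 2))
      MeasureTheory.volume 0 t := by
    apply ContinuousOn.intervalIntegrable
    apply ContinuousOn.div
    · fun_prop
    · fun_prop
    · intro z hz
      rw [Set.uIcc_of_le ht0] at hz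
      have hz1 : z < 1 := lt_of_le_of_lt hz.2 ht1
      nlinarith [hz.1]
  have := intervalIntegral.integral_eq_sub_of_hasDerivAt key hint
  rw [this]
  simp

lemma BC_eval (Λ : ℝ) (hΛ : 1 ≤ Λ) :
    BC Λ = 1 / π * ((Λ / E Λ) ^ 3 / 9 - 2 * (Λ / E Λ) / 3)
      + 2 / (3 * π) * Real.log (E Λ + Λ) := by
  have hΛ0 : (0:ℝ) < Λ := by linarith
  have hE2 : (E Λ) ^ 2 = 1 + Λ ^ 2 := Real.sq_sqrt (by positivity)
  have hEpos : 0 < E Λ := Real.sqrt_pos.2 (by positivity)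
  have hEgt : Λ < E Λ := by nlinarith
  set t := Λ / E Λ with ht
  have ht0 : 0 ≤ t := by positivity
  have ht1 : t < 1 := (div_lt_one hEpos).2 hEgt
  have hlog : Real.log (1 + t) - Real.log (1 - t) = 2 * Real.log (E Λ + Λ) := by
    have h1 : 1 + t = (E Λ + Λ) / E Λ := by rw [ht]; field_simp
    have h2 : 1 - t = (E Λ - Λ) / E Λ := by rw [ht]; field_simp
    have hSum : 0 < E Λ + Λ := by linarith
    have hDiff : 0 < E Λ - Λ := by linarith
    rw [h1, h2, Real.log_div (by positivity) hEpos.ne',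
      Real.log_div (by positivity) hEpos.ne']
    have : Real.log (E Λ - Λ) = - Real.log (E Λ + Λ) := by
      rw [← Real.log_inv]
      congr 1
      exact eq_inv_of_mul_eq_one_left (by nlinarith)
    rw [this]; ring
  have : BC Λ = 1 / π * (∫ z in (0:ℝ)..t, (z ^ 2 - z ^ 4 / 3) / (1 - z ^ 2)) := by
    simp only [BC, BL, ZL, if_pos rfl]
    norm_num
    rfl
  rw [this, core_integral t ht0 ht1, hlog]
  ring


theorem BC_asymptotics :
    Filter.Tendsto (fun Λ : ℝ => BC Λ - 2 / (3 * π) * Real.log Λ) Filter.atTop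
      (nhds (-5 / (9 * π) + 2 * Real.log 2 / (3 * π))) := by
  have hπ : (0:ℝ) < π := Real.pi_pos
  -- target function
  have heq : ∀ᶠ Λ in Filter.atTop, (fun Λ : ℝ =>
      1 / π * ((Λ / E Λ) ^ 3 / 9 - 2 * (Λ / E Λ) / 3)
        + 2 / (3 * π) * Real.log (E Λ / Λ + 1)) Λ
      = BC Λ - 2 / (3 * π) * Real.log Λ := by
    filter_upwards [Filter.eventually_ge_atTop (1:ℝ)] with Λ hΛ
    have hΛ0 : (0:ℝ) < Λ := by linarith
    have hEpos : 0 < E Λ := Real.sqrt_pos.2 (by positivity)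
    rw [BC_eval Λ hΛ]
    have : Real.log (E Λ / Λ + 1) = Real.log (E Λ + Λ) - Real.log Λ := by
      rw [← Real.log_div (by positivity) hΛ0.ne']
      congr 1
      field_simp
    rw [this]; ring
  refine Filter.Tendsto.congr' heq ?_
  -- limit of Λ / E Λ is 1, limit of E Λ / Λ is 1
  have hratio : Filter.Tendsto (fun Λ : ℝ => Λ / E Λ) Filter.atTop (nhds 1) := by
    have h1 : ∀ᶠ Λ : ℝ in Filter.atTop, 1 / Real.sqrt (1 / Λ ^ 2 + 1) = Λ / E Λ := by
      filter_upwards [Filter.eventually_gt_atTop (0:ℝ)] with Λ hΛ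
      have hEpos : 0 < E Λ := Real.sqrt_pos.2 (by positivity)
      rw [div_eq_div_iff (by positivity) hEpos.ne', one_mul]
      rw [show Λ * Real.sqrt (1 / Λ ^ 2 + 1) = Real.sqrt (Λ ^ 2 * (1 / Λ ^ 2 + 1)) by
        rw [Real.sqrt_mul (by positivity), Real.sqrt_sq hΛ.le], eq_comm]
      unfold E
      congr 1
      field_simp
    refine Filter.Tendsto.congr' h1 ?_
    have : Filter.Tendsto (fun Λ : ℝ => 1 / Λ ^ 2 + 1) Filter.atTop (nhds 1) := by
      have hp : Filter.Tendsto (fun x : ℝ => x ^ 2) Filter.atTop Filter.atTop :=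
        Filter.tendsto_pow_atTop two_ne_zero
      have h0 : Filter.Tendsto (fun x : ℝ => (x ^ 2)⁻¹) Filter.atTop (nhds 0) :=
        tendsto_inv_atTop_zero.comp hp
      simpa [one_div] using h0.add_const 1
    have hs : Filter.Tendsto (fun Λ : ℝ => Real.sqrt (1 / Λ ^ 2 + 1)) Filter.atTop
        (nhds 1) := by
      have h' := (Real.continuous_sqrt.tendsto 1).comp this
      simpa [Function.comp_def] using h'
    have h2 := hs.inv₀ one_ne_zero
    rw [inv_one] at h2
    simpa [one_div] using h2
  have hratio2 : Filter.Tendsto (fun Λ : ℝ => E Λ / Λ) Filter.atTop (nhds 1) := by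
    have h := hratio.inv₀ one_ne_zero
    rw [inv_one] at h
    refine h.congr' ?_
    filter_upwards [Filter.eventually_gt_atTop (0:ℝ)] with Λ hΛ
    have hEpos : 0 < E Λ := Real.sqrt_pos.2 (by positivity)
    rw [inv_div]
  have hlim : Filter.Tendsto (fun Λ : ℝ =>
      1 / π * ((Λ / E Λ) ^ 3 / 9 - 2 * (Λ / E Λ) / 3)
        + 2 / (3 * π) * Real.log (E Λ / Λ + 1)) Filter.atTop
      (nhds (1 / π * (1 ^ 3 / 9 - 2 * 1 / 3) + 2 / (3 * π) * Real.log (1 + 1))) := by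
    have h1 := ((hratio.pow 3).div_const 9).sub (((hratio.const_mul 2)).div_const 3)
    have h2 : Filter.Tendsto (fun Λ : ℝ => Real.log (E Λ / Λ + 1)) Filter.atTop
        (nhds (Real.log (1 + 1))) := by
      exact (Real.continuousAt_log (by norm_num)).tendsto.comp (hratio2.add_const 1)
    exact (h1.const_mul _).add (h2.const_mul _)
  convert hlim using 2
  norm_num
  ring
end

section
/- Let Λ ≥ 1 and U_Λ as in the definition (U_Λ(r) = B_Λ - B_Λ(r) for 0 ≤ r ≤ 2Λ, U_Λ(r) = 0 otherwise). Then for every fixed r ≥ 0, U_Λ(r) → U(r) as Λ → ∞. -/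
open Real

lemma E_pos (x : ℝ) : 0 < E x := Real.sqrt_pos.2 (by positivity)

lemma E_sq (x : ℝ) : E x ^ 2 = 1 + x ^ 2 := Real.sq_sqrt (by positivity)

lemma lt_E (x : ℝ) : x < E x := by
  have h : x ≤ |x| := le_abs_self x
  have h2 : |x| < E x := by
    rw [E, ← Real.sqrt_sq_eq_abs]
    exact Real.sqrt_lt_sqrt (sq_nonneg x) (by linarith)
  linarith

lemma le_E (x : ℝ) : x ≤ E x := (lt_E x).le

lemma E_mono {x y : ℝ} (hx : 0 ≤ x) (hxy : x ≤ y) : E x ≤ E y := by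
  rw [E, E]
  exact Real.sqrt_le_sqrt (by nlinarith)

lemma one_le_E (x : ℝ) : 1 ≤ E x := by
  have h1 := E_pos x
  have h2 := E_sq x
  nlinarith [sq_nonneg x]

section Numeric
variable {r Λ : ℝ} (hr : 0 < r) (hΛ : r + 1 ≤ Λ)

lemma hEF_aux (hr : 0 < r) (hΛ : r + 1 ≤ Λ) : 1 + Λ * (Λ - r) ≤ E Λ * E (Λ - r) := by
  have h1 : E Λ * E (Λ - r) = Real.sqrt ((1 + Λ ^ 2) * (1 + (Λ - r) ^ 2)) := by
    rw [E, E, ← Real.sqrt_mul (by positivity)]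
  rw [h1]
  apply Real.le_sqrt' (by nlinarith) |>.2
  nlinarith [sq_nonneg r]

lemma hba_aux (hr : 0 < r) (hΛ : r + 1 ≤ Λ) : (E Λ - E (Λ - r)) / r ≤ Λ / E Λ := by
  have hEpos := E_pos Λ
  have hE2 := E_sq Λ
  rw [div_le_div_iff₀ hr hEpos]
  nlinarith [hEF_aux hr hΛ]

lemma hb0_aux (hr : 0 < r) (hΛ : r + 1 ≤ Λ) : 0 ≤ (E Λ - E (Λ - r)) / r := by
  apply div_nonneg _ hr.le
  have := E_mono (x := Λ - r) (y := Λ) (by linarith) (by linarith)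
  linarith

lemma ha1_aux (hΛ0 : 0 < Λ) : Λ / E Λ < 1 := (div_lt_one (E_pos Λ)).2 (lt_E Λ)

lemma hab_aux (hr : 0 < r) (hΛ : r + 1 ≤ Λ) :
    Λ / E Λ - (E Λ - E (Λ - r)) / r ≤ r / ((E Λ) ^ 2 * (Λ - r)) := by
  have hEpos := E_pos Λ
  have hFpos := E_pos (Λ - r)
  have hE2 := E_sq Λ
  have hF2 := E_sq (Λ - r)
  have hFge : Λ - r ≤ E (Λ - r) := le_E _
  have hEF := hEF_aux hr hΛ
  have hts : (E Λ * E (Λ - r) - (1 + Λ * (Λ - r))) * (E Λ * E (Λ - r) + (1 + Λ * (Λ - r)))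
      = r ^ 2 := by
    linear_combination (E (Λ - r)) ^ 2 * hE2 + (1 + Λ ^ 2) * hF2
  have h1 : E Λ * (Λ - r) ≤ E Λ * E (Λ - r) + (1 + Λ * (Λ - r)) := by
    nlinarith [mul_le_mul_of_nonneg_left hFge hEpos.le]
  have h2 : 0 ≤ E Λ * E (Λ - r) - (1 + Λ * (Λ - r)) := by linarith
  have h3 : (E Λ * E (Λ - r) - (1 + Λ * (Λ - r))) * (E Λ * (Λ - r)) ≤ r ^ 2 := by
    calc (E Λ * E (Λ - r) - (1 + Λ * (Λ - r))) * (E Λ * (Λ - r))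
        ≤ (E Λ * E (Λ - r) - (1 + Λ * (Λ - r))) * (E Λ * E (Λ - r) + (1 + Λ * (Λ - r))) :=
          mul_le_mul_of_nonneg_left h1 h2
      _ = r ^ 2 := hts
  rw [div_sub_div _ _ hEpos.ne' hr.ne', div_le_div_iff₀ (mul_pos hEpos hr) (mul_pos (pow_pos hEpos 2) (by linarith))]
  calc (Λ * r - E Λ * (E Λ - E (Λ - r))) * ((E Λ) ^ 2 * (Λ - r))
      = E Λ * ((E Λ * E (Λ - r) - (1 + Λ * (Λ - r))) * (E Λ * (Λ - r))) := by
        linear_combination (-((E Λ) ^ 2 * (Λ - r))) * hE2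
    _ ≤ E Λ * r ^ 2 := mul_le_mul_of_nonneg_left h3 hEpos.le
    _ = r * (E Λ * r) := by ring

lemma h1a_aux (hr : 0 < r) (hΛ : r + 1 ≤ Λ) : 1 - Λ / E Λ ≤ 1 / (Λ - r) := by
  have hEpos := E_pos Λ
  have hE2 := E_sq Λ
  have hle := le_E Λ
  have h1 := one_le_E Λ
  have key : (E Λ - Λ) * (Λ - r) ≤ E Λ := by
    nlinarith [mul_nonneg (sub_nonneg.2 hle) hr.le]
  have heq : 1 - Λ / E Λ = (E Λ - Λ) / E Λ := by field_simp
  rw [heq, div_le_div_iff₀ hEpos (by linarith)]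
  nlinarith [mul_nonneg (sub_nonneg.2 hle) hr.le]

lemma h1b_aux (hr : 0 < r) (hΛ : r + 1 ≤ Λ) :
    1 - (E Λ - E (Λ - r)) / r ≤ (1 + r) / (Λ - r) := by
  have h1 := hab_aux hr hΛ
  have h2 := h1a_aux hr hΛ
  have hE1 := one_le_E Λ
  have h3 : r / ((E Λ) ^ 2 * (Λ - r)) ≤ r / (Λ - r) := by
    have hp : (0:ℝ) < (E Λ) ^ 2 * (Λ - r) := mul_pos (pow_pos (E_pos Λ) 2) (by linarith)
    rw [div_le_div_iff₀ hp (by linarith)]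
    have hE2' : (1:ℝ) ≤ (E Λ) ^ 2 := by nlinarith [one_le_E Λ, E_pos Λ]
    nlinarith [mul_nonneg (mul_nonneg hr.le (by linarith : (0:ℝ) ≤ Λ - r))
      (by linarith : (0:ℝ) ≤ (E Λ) ^ 2 - 1)]
  have h4 : (1 + r) / (Λ - r) = 1 / (Λ - r) + r / (Λ - r) := by ring
  linarith

lemma abs_sub_sub_le (x y z : ℝ) : |x - y - z| ≤ |x| + |y| + |z| :=
  le_trans (abs_sub _ _) (add_le_add_left (abs_sub _ _) _)

lemma mul_abs_le {c x B : ℝ} (hc : 0 ≤ c) (hx : |x| ≤ B) : |c * x| ≤ c * B := by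
  rw [abs_mul, abs_of_nonneg hc]
  exact mul_le_mul_of_nonneg_left hx hc

section KeyLemmas
variable {r Λ : ℝ}

lemma cont1_aux (hr : 0 < r) (c d : ℝ) (h0 : 0 ≤ c) (hcd : c ≤ d) (hd1 : d < 1) :
    IntervalIntegrable (fun z => (z ^ 2 - z ^ 4 / 3) / (1 - z ^ 2))
      MeasureTheory.volume c d := by
  apply ContinuousOn.intervalIntegrable
  apply ContinuousOn.div (by fun_prop) (by fun_prop)
  intro z hz
  rw [Set.uIcc_of_le hcd] at hz
  have h1 := hz.1; have h2 := hz.2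
  have hz0 : 0 ≤ z := le_trans h0 h1
  exact ne_of_gt (by nlinarith)

lemma cont3_aux (r : ℝ) (c d : ℝ) (h0 : 0 ≤ c) (hcd : c ≤ d) (hd1 : d ≤ 1) :
    IntervalIntegrable (fun z => (z ^ 2 - z ^ 4 / 3) / (1 + r ^ 2 * (1 - z ^ 2) / 4))
      MeasureTheory.volume c d := by
  apply ContinuousOn.intervalIntegrable
  apply ContinuousOn.div (by fun_prop) (by fun_prop)
  intro z hz
  rw [Set.uIcc_of_le hcd] at hz
  have h1 := hz.1; have h2 := hz.2
  have hz0 : 0 ≤ z := le_trans h0 h1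
  have hz2 : (0:ℝ) ≤ 1 - z ^ 2 := by nlinarith
  have h3 : (0:ℝ) ≤ r ^ 2 * (1 - z ^ 2) / 4 := by positivity
  exact ne_of_gt (by linarith)

set_option maxHeartbeats 1000000 in
lemma decomp_aux (hr : 0 < r) (hΛ : r + 1 ≤ Λ) :
    UL Λ r - U r
      = 1 / π * (∫ z in ((E Λ - E (Λ - r)) / r)..(Λ / E Λ),
            (z ^ 2 - z ^ 4 / 3) / (1 - z ^ 2))
        - r / (2 * π) * (∫ z in (0:ℝ)..((E Λ - E (Λ - r)) / r),
            (z - z ^ 3 / 3) / (E Λ - r * z / 2))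
        - r ^ 2 / (4 * π) * ∫ z in ((E Λ - E (Λ - r)) / r)..(1:ℝ),
            (z ^ 2 - z ^ 4 / 3) / (1 + r ^ 2 * (1 - z ^ 2) / 4) := by
  have hπ := Real.pi_pos
  have hEpos := E_pos Λ
  have hb0 := hb0_aux hr hΛ
  have hba := hba_aux hr hΛ
  have ha1 := ha1_aux (show (0:ℝ) < Λ by linarith)
  have hb1 : (E Λ - E (Λ - r)) / r < 1 := lt_of_le_of_lt hba ha1
  have cont2 : IntervalIntegrable
      (fun z => (z ^ 2 - z ^ 4 / 3) / ((1 - z ^ 2) * (1 + r ^ 2 * (1 - z ^ 2) / 4)))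
      MeasureTheory.volume 0 ((E Λ - E (Λ - r)) / r) := by
    apply ContinuousOn.intervalIntegrable
    apply ContinuousOn.div (by fun_prop) (by fun_prop)
    intro z hz
    rw [Set.uIcc_of_le hb0] at hz
    have h1 := hz.1; have h2 := hz.2
    have hp1 : (0:ℝ) < 1 - z ^ 2 := by nlinarith
    have hp2 : (0:ℝ) < 1 + r ^ 2 * (1 - z ^ 2) / 4 := by nlinarith [sq_nonneg r]
    exact ne_of_gt (by positivity)
  have hZ0 : ZL Λ 0 = Λ / E Λ := if_pos rfl
  have hZr : ZL Λ r = (E Λ - E (Λ - r)) / r := if_neg hr.ne'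
  have hUL : UL Λ r = BC Λ - BL Λ r := if_pos ⟨hr.le, by linarith⟩
  have hBC : BC Λ = 1 / π * ∫ z in (0:ℝ)..(Λ / E Λ),
      (z ^ 2 - z ^ 4 / 3) / (1 - z ^ 2) := by
    rw [BC, BL, hZ0]
    norm_num
  have hsplitK : (∫ z in (0:ℝ)..(Λ / E Λ), (z ^ 2 - z ^ 4 / 3) / (1 - z ^ 2))
      = (∫ z in (0:ℝ)..((E Λ - E (Λ - r)) / r), (z ^ 2 - z ^ 4 / 3) / (1 - z ^ 2))
        + ∫ z in ((E Λ - E (Λ - r)) / r)..(Λ / E Λ),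
            (z ^ 2 - z ^ 4 / 3) / (1 - z ^ 2) :=
    (intervalIntegral.integral_add_adjacent_intervals
      (cont1_aux hr _ _ le_rfl hb0 hb1) (cont1_aux hr _ _ hb0 hba ha1)).symm
  have hcongrb : (∫ z in (0:ℝ)..((E Λ - E (Λ - r)) / r), (z ^ 2 - z ^ 4 / 3) / (1 - z ^ 2))
      = (∫ z in (0:ℝ)..((E Λ - E (Λ - r)) / r),
          (z ^ 2 - z ^ 4 / 3) / ((1 - z ^ 2) * (1 + r ^ 2 * (1 - z ^ 2) / 4)))
        + r ^ 2 / 4 * ∫ z in (0:ℝ)..((E Λ - E (Λ - r)) / r),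
            (z ^ 2 - z ^ 4 / 3) / (1 + r ^ 2 * (1 - z ^ 2) / 4) := by
    have heq : (∫ z in (0:ℝ)..((E Λ - E (Λ - r)) / r), (z ^ 2 - z ^ 4 / 3) / (1 - z ^ 2))
        = ∫ z in (0:ℝ)..((E Λ - E (Λ - r)) / r),
            ((z ^ 2 - z ^ 4 / 3) / ((1 - z ^ 2) * (1 + r ^ 2 * (1 - z ^ 2) / 4))
              + r ^ 2 / 4 * ((z ^ 2 - z ^ 4 / 3) / (1 + r ^ 2 * (1 - z ^ 2) / 4))) := by
      apply intervalIntegral.integral_congr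
      intro z hz
      rw [Set.uIcc_of_le hb0] at hz
      have h1 := hz.1; have h2 := hz.2
      have hp1 : (0:ℝ) < 1 - z ^ 2 := by nlinarith
      have hp2 : (0:ℝ) < 1 + r ^ 2 * (1 - z ^ 2) / 4 := by nlinarith [sq_nonneg r]
      field_simp
    rw [heq,
      intervalIntegral.integral_add cont2 ((cont3_aux r _ _ le_rfl hb0 hb1.le).const_mul _),
      intervalIntegral.integral_const_mul]
  have hsplitJ : (∫ z in (0:ℝ)..1, (z ^ 2 - z ^ 4 / 3) / (1 + r ^ 2 * (1 - z ^ 2) / 4))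
      = (∫ z in (0:ℝ)..((E Λ - E (Λ - r)) / r),
          (z ^ 2 - z ^ 4 / 3) / (1 + r ^ 2 * (1 - z ^ 2) / 4))
        + ∫ z in ((E Λ - E (Λ - r)) / r)..(1:ℝ),
            (z ^ 2 - z ^ 4 / 3) / (1 + r ^ 2 * (1 - z ^ 2) / 4) :=
    (intervalIntegral.integral_add_adjacent_intervals
      (cont3_aux r _ _ le_rfl hb0 hb1.le) (cont3_aux r _ _ hb0 hb1.le le_rfl)).symm
  rw [hUL, hBC]
  simp only [U, BL, hZr]
  rw [hsplitK, hcongrb, hsplitJ]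
  ring

set_option maxHeartbeats 1000000 in
lemma boundK_aux (hr : 0 < r) (hΛ : r + 1 ≤ Λ) :
    |∫ z in ((E Λ - E (Λ - r)) / r)..(Λ / E Λ),
      (z ^ 2 - z ^ 4 / 3) / (1 - z ^ 2)| ≤ r / (Λ - r) := by
  have hEpos := E_pos Λ
  have hE2 := E_sq Λ
  have hb0 := hb0_aux hr hΛ
  have hba := hba_aux hr hΛ
  have ha1 := ha1_aux (show (0:ℝ) < Λ by linarith)
  have hab := hab_aux hr hΛ
  have hΛr : (0:ℝ) < Λ - r := by linarith
  have hpt : ∀ x ∈ Set.uIoc ((E Λ - E (Λ - r)) / r) (Λ / E Λ),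
      ‖(x ^ 2 - x ^ 4 / 3) / (1 - x ^ 2)‖ ≤ (E Λ) ^ 2 := by
    intro x hx
    rw [Set.uIoc_of_le hba, Set.mem_Ioc] at hx
    have hx0 : 0 ≤ x := le_trans hb0 hx.1.le
    have hxa : x ≤ Λ / E Λ := hx.2
    have hxE : x * E Λ ≤ Λ := by rwa [← le_div_iff₀ hEpos]
    have h1x : 1 ≤ (E Λ) ^ 2 * (1 - x ^ 2) := by
      nlinarith [mul_le_mul hxE hxE (mul_nonneg hx0 hEpos.le) (by linarith : (0:ℝ) ≤ Λ)]
    have hx1 : x < 1 := lt_of_le_of_lt hxa ha1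
    have hden : (0:ℝ) < 1 - x ^ 2 := by nlinarith [sq_nonneg (E Λ)]
    have hfnn : (0:ℝ) ≤ x ^ 2 - x ^ 4 / 3 := by nlinarith [sq_nonneg x, sq_nonneg (x ^ 2)]
    rw [Real.norm_eq_abs, abs_of_nonneg (div_nonneg hfnn hden.le), div_le_iff₀ hden]
    nlinarith [sq_nonneg x, sq_nonneg (x ^ 2)]
  have h := intervalIntegral.norm_integral_le_of_norm_le_const hpt
  rw [Real.norm_eq_abs] at h
  calc |∫ z in ((E Λ - E (Λ - r)) / r)..(Λ / E Λ), (z ^ 2 - z ^ 4 / 3) / (1 - z ^ 2)|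
      ≤ (E Λ) ^ 2 * |Λ / E Λ - (E Λ - E (Λ - r)) / r| := h
    _ = (E Λ) ^ 2 * (Λ / E Λ - (E Λ - E (Λ - r)) / r) := by
        rw [abs_of_nonneg (by linarith)]
    _ ≤ (E Λ) ^ 2 * (r / ((E Λ) ^ 2 * (Λ - r))) :=
        mul_le_mul_of_nonneg_left hab (by positivity)
    _ = r / (Λ - r) := by field_simp

set_option maxHeartbeats 1000000 in
lemma boundI2_aux (hr : 0 < r) (hΛ : r + 1 ≤ Λ) :
    |∫ z in (0:ℝ)..((E Λ - E (Λ - r)) / r),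
      (z - z ^ 3 / 3) / (E Λ - r * z / 2)| ≤ 1 / (Λ - r) := by
  have hEpos := E_pos Λ
  have hEge := le_E Λ
  have hb0 := hb0_aux hr hΛ
  have hba := hba_aux hr hΛ
  have ha1 := ha1_aux (show (0:ℝ) < Λ by linarith)
  have hb1 : (E Λ - E (Λ - r)) / r < 1 := lt_of_le_of_lt hba ha1
  have hΛr : (0:ℝ) < Λ - r := by linarith
  have hpt : ∀ x ∈ Set.uIoc (0:ℝ) ((E Λ - E (Λ - r)) / r),
      ‖(x - x ^ 3 / 3) / (E Λ - r * x / 2)‖ ≤ 1 / (Λ - r) := by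
    intro x hx
    rw [Set.uIoc_of_le hb0, Set.mem_Ioc] at hx
    have hx0 : 0 ≤ x := hx.1.le
    have hx1 : x ≤ 1 := le_trans hx.2 hb1.le
    have hdge : Λ - r ≤ E Λ - r * x / 2 := by nlinarith
    have hdpos : (0:ℝ) < E Λ - r * x / 2 := by linarith
    have hfnn : (0:ℝ) ≤ x - x ^ 3 / 3 := by nlinarith [sq_nonneg x]
    have hfle : x - x ^ 3 / 3 ≤ 1 := by nlinarith [sq_nonneg x]
    rw [Real.norm_eq_abs, abs_of_nonneg (div_nonneg hfnn hdpos.le)]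
    exact div_le_div₀ zero_le_one hfle hΛr hdge
  have h := intervalIntegral.norm_integral_le_of_norm_le_const hpt
  rw [Real.norm_eq_abs] at h
  calc |∫ z in (0:ℝ)..((E Λ - E (Λ - r)) / r), (z - z ^ 3 / 3) / (E Λ - r * z / 2)|
      ≤ 1 / (Λ - r) * |(E Λ - E (Λ - r)) / r - 0| := h
    _ = 1 / (Λ - r) * ((E Λ - E (Λ - r)) / r) := by
        rw [sub_zero, abs_of_nonneg hb0]
    _ ≤ 1 / (Λ - r) * 1 := mul_le_mul_of_nonneg_left hb1.le (by positivity)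
    _ = 1 / (Λ - r) := mul_one _

set_option maxHeartbeats 1000000 in
lemma boundJ_aux (hr : 0 < r) (hΛ : r + 1 ≤ Λ) :
    |∫ z in ((E Λ - E (Λ - r)) / r)..(1:ℝ),
      (z ^ 2 - z ^ 4 / 3) / (1 + r ^ 2 * (1 - z ^ 2) / 4)| ≤ (1 + r) / (Λ - r) := by
  have hb0 := hb0_aux hr hΛ
  have hba := hba_aux hr hΛ
  have ha1 := ha1_aux (show (0:ℝ) < Λ by linarith)
  have hb1 : (E Λ - E (Λ - r)) / r < 1 := lt_of_le_of_lt hba ha1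
  have h1b := h1b_aux hr hΛ
  have hpt : ∀ x ∈ Set.uIoc ((E Λ - E (Λ - r)) / r) (1:ℝ),
      ‖(x ^ 2 - x ^ 4 / 3) / (1 + r ^ 2 * (1 - x ^ 2) / 4)‖ ≤ 1 := by
    intro x hx
    rw [Set.uIoc_of_le hb1.le, Set.mem_Ioc] at hx
    have hx0 : 0 ≤ x := le_trans hb0 hx.1.le
    have hx1 : x ≤ 1 := hx.2
    have hgnn : (0:ℝ) ≤ r ^ 2 * (1 - x ^ 2) / 4 := by
      have : (0:ℝ) ≤ 1 - x ^ 2 := by nlinarith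
      positivity
    have hgpos : (0:ℝ) < 1 + r ^ 2 * (1 - x ^ 2) / 4 := by linarith
    have hx2 : x ^ 2 ≤ 1 := by nlinarith
    have hx4 : x ^ 4 ≤ x ^ 2 := by nlinarith [mul_le_mul_of_nonneg_left hx2 (sq_nonneg x)]
    have hfnn : (0:ℝ) ≤ x ^ 2 - x ^ 4 / 3 := by linarith [sq_nonneg x]
    have hfle : x ^ 2 - x ^ 4 / 3 ≤ 1 := by nlinarith [pow_nonneg hx0 4]
    rw [Real.norm_eq_abs, abs_of_nonneg (div_nonneg hfnn hgpos.le), div_le_one hgpos]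
    linarith
  have h := intervalIntegral.norm_integral_le_of_norm_le_const hpt
  rw [Real.norm_eq_abs] at h
  calc |∫ z in ((E Λ - E (Λ - r)) / r)..(1:ℝ),
        (z ^ 2 - z ^ 4 / 3) / (1 + r ^ 2 * (1 - z ^ 2) / 4)|
      ≤ 1 * |1 - (E Λ - E (Λ - r)) / r| := h
    _ = 1 - (E Λ - E (Λ - r)) / r := by rw [one_mul, abs_of_nonneg (by linarith)]
    _ ≤ (1 + r) / (Λ - r) := h1b

set_option maxHeartbeats 1000000 in
lemma key (hr : 0 < r) (hΛ : r + 1 ≤ Λ) :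
    |UL Λ r - U r| ≤ (r / π + r / (2 * π) + r ^ 2 * (1 + r) / (4 * π)) / (Λ - r) := by
  have hπ := Real.pi_pos
  have hΛr : (0:ℝ) < Λ - r := by linarith
  have hfin : 1 / π * (r / (Λ - r)) + r / (2 * π) * (1 / (Λ - r))
      + r ^ 2 / (4 * π) * ((1 + r) / (Λ - r))
      = (r / π + r / (2 * π) + r ^ 2 * (1 + r) / (4 * π)) / (Λ - r) := by
    field_simp
  rw [decomp_aux hr hΛ]
  refine le_trans (abs_sub_sub_le _ _ _) (le_trans ?_ (le_of_eq hfin))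
  exact add_le_add (add_le_add
    (mul_abs_le (by positivity) (boundK_aux hr hΛ))
    (mul_abs_le (by positivity) (boundI2_aux hr hΛ)))
    (mul_abs_le (by positivity) (boundJ_aux hr hΛ))

end KeyLemmas

theorem UL_tendsto_U (r : ℝ) (hr : 0 ≤ r) :
    Filter.Tendsto (fun Λ : ℝ => UL Λ r) Filter.atTop (nhds (U r)) := by
  rcases hr.eq_or_lt with h0 | hrpos
  · have hU : U r = 0 := by rw [← h0]; simp [U]
    have hUL : ∀ Λ : ℝ, UL Λ r = 0 := by
      intro Λ
      rw [← h0]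
      unfold UL
      split_ifs <;> simp [BC]
    rw [hU]
    simp only [hUL]
    exact tendsto_const_nhds
  · rw [tendsto_iff_dist_tendsto_zero]
    apply squeeze_zero'
      (g := fun Λ => (r / π + r / (2 * π) + r ^ 2 * (1 + r) / (4 * π)) / (Λ - r))
    · exact Filter.Eventually.of_forall fun Λ => dist_nonneg
    · filter_upwards [Filter.eventually_ge_atTop (r + 1)] with Λ hΛ
      rw [Real.dist_eq]
      exact key hrpos hΛ
    · apply Filter.Tendsto.div_atTop tendsto_const_nhds
      simpa [sub_eq_add_neg] using
        Filter.tendsto_atTop_add_const_right Filter.atTop (-r) Filter.tendsto_id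
end Numeric
end

section
/- Fix constants C, K > 0 and for m ≥ 3 define Q_m(u) = u + ∑_{j=3}^m C^j (K log j)^{m-j} u^j. Then there exists a constant A(C,K) > 0, independent of m, such that Q_m(u) ≤ 2u for all 0 ≤ u ≤ A(C,K)/(K log m)^{m/2}. -/
open Real Finset

theorem Qm_linear_bound (C K : ℝ) (hC : 0 < C) (hK : 0 < K) (hK3 : 1 < K * Real.log 3) :
    ∃ A : ℝ, 0 < A ∧ ∀ m : ℕ, 3 ≤ m → ∀ u : ℝ, 0 ≤ u →
      u ≤ A / (K * Real.log m) ^ ((m : ℝ) / 2) →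
      u + ∑ j ∈ Finset.Icc 3 m, C ^ j * (K * Real.log j) ^ (m - j) * u ^ j ≤ 2 * u := by
  have hL3 : 1 < K * Real.log 3 := hK3
  set L3 : ℝ := K * Real.log 3 with hL3def
  have hL3pos : 0 < L3 := lt_trans one_pos hL3
  set b : ℝ := L3 / (2 * C) with hbdef
  have hb : 0 < b := div_pos hL3pos (by linarith)
  refine ⟨min 1 (Real.sqrt b ^ 3), lt_min one_pos (by positivity), ?_⟩
  set A : ℝ := min 1 (Real.sqrt b ^ 3) with hAdef
  have hA1 : A ≤ 1 := min_le_left _ _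
  have hA0 : 0 < A := lt_min one_pos (by positivity)
  have hA2 : A ^ 2 ≤ b ^ 3 := by
    calc A ^ 2 ≤ (Real.sqrt b ^ 3) ^ 2 :=
          pow_le_pow_left₀ hA0.le (min_le_right _ _) 2
      _ = (Real.sqrt b ^ 2) ^ 3 := by ring
      _ = b ^ 3 := by rw [Real.sq_sqrt hb.le]
  intro m hm u hu0 hu
  set Lm : ℝ := K * Real.log m with hLmdef
  have hL3Lm : L3 ≤ Lm := by
    have : Real.log 3 ≤ Real.log m :=
      Real.log_le_log (by norm_num) (by exact_mod_cast hm)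
    exact mul_le_mul_of_nonneg_left this hK.le
  have hLm1 : 1 < Lm := lt_of_lt_of_le hL3 hL3Lm
  have hLmpos : 0 < Lm := lt_trans one_pos hLm1
  set v : ℝ := A / Lm ^ ((m : ℝ) / 2) with hvdef
  have hv0 : 0 < v := div_pos hA0 (Real.rpow_pos_of_pos hLmpos _)
  -- key per-term bound
  have key : ∀ j ∈ Finset.Icc 3 m,
      C ^ j * (K * Real.log j) ^ (m - j) * u ^ j ≤ (1/2 : ℝ) ^ j * u := by
    intro j hj
    rw [Finset.mem_Icc] at hj
    obtain ⟨hj3, hjm⟩ := hj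
    set Lj : ℝ := K * Real.log j with hLjdef
    have hLjLm : Lj ≤ Lm := by
      have : Real.log j ≤ Real.log m :=
        Real.log_le_log (by exact_mod_cast (by omega : (0:ℕ) < j)) (by exact_mod_cast hjm)
      exact mul_le_mul_of_nonneg_left this hK.le
    have hL3Lj : L3 ≤ Lj := by
      have : Real.log 3 ≤ Real.log j :=
        Real.log_le_log (by norm_num) (by exact_mod_cast hj3)
      exact mul_le_mul_of_nonneg_left this hK.le
    have hLj0 : 0 ≤ Lj := le_trans hL3pos.le hL3Lj
    -- A^(j-1) ≤ b^j
    have hAb : A ^ (j - 1) ≤ b ^ j := by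
      rcases le_or_gt 1 b with hb1 | hb1
      · exact le_trans (pow_le_one₀ hA0.le hA1) (one_le_pow₀ hb1)
      · have hsq : (A ^ (j - 1)) ^ 2 ≤ (b ^ j) ^ 2 := by
          calc (A ^ (j - 1)) ^ 2 = (A ^ 2) ^ (j - 1) := by rw [← pow_mul, ← pow_mul, Nat.mul_comm]
            _ ≤ (b ^ 3) ^ (j - 1) := pow_le_pow_left₀ (by positivity) hA2 _
            _ = b ^ (3 * (j - 1)) := by rw [← pow_mul]
            _ ≤ b ^ (j * 2) := pow_le_pow_of_le_one hb.le hb1.le (by omega)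
            _ = (b ^ j) ^ 2 := by rw [pow_mul]
        exact (pow_le_pow_iff_left₀ (by positivity) (by positivity) (by norm_num)).mp hsq
    -- core inequality
    have core : C ^ j * Lm ^ (m - j) * v ^ (j - 1) ≤ (1/2 : ℝ) ^ j := by
      have hvpow : v ^ (j - 1) = A ^ (j - 1) / Lm ^ ((m : ℝ) / 2 * ((j:ℝ) - 1)) := by
        rw [hvdef, div_pow, ← Real.rpow_natCast (Lm ^ ((m : ℝ) / 2)) (j-1),
          ← Real.rpow_mul hLmpos.le]
        congr 2
        rw [Nat.cast_sub (by omega)]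
        norm_num
      rw [hvpow, ← mul_div_assoc, div_le_iff₀ (Real.rpow_pos_of_pos hLmpos _)]
      have hstep1 : C ^ j * A ^ (j - 1) ≤ (1/2 : ℝ) ^ j * L3 ^ j := by
        calc C ^ j * A ^ (j - 1) ≤ C ^ j * b ^ j :=
              mul_le_mul_of_nonneg_left hAb (by positivity)
          _ = (C * b) ^ j := by rw [mul_pow]
          _ = (1/2 * L3) ^ j := by
              congr 1
              field_simp [hbdef]
              rw [hbdef]; field_simp
          _ = (1/2 : ℝ) ^ j * L3 ^ j := by rw [mul_pow]
      have hstep2 : Lm ^ (m - j) * L3 ^ j ≤ Lm ^ ((m : ℝ) / 2 * ((j:ℝ) - 1)) := by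
        calc Lm ^ (m - j) * L3 ^ j ≤ Lm ^ (m - j) * Lm ^ j :=
              mul_le_mul_of_nonneg_left (pow_le_pow_left₀ hL3pos.le hL3Lm j) (by positivity)
          _ = Lm ^ m := by rw [← pow_add]; congr 1; omega
          _ = Lm ^ (m : ℝ) := by rw [Real.rpow_natCast]
          _ ≤ Lm ^ ((m : ℝ) / 2 * ((j:ℝ) - 1)) := by
              apply Real.rpow_le_rpow_of_exponent_le hLm1.le
              have hj3' : (3:ℝ) ≤ (j:ℝ) := by exact_mod_cast hj3
              have hm0 : (0:ℝ) ≤ (m:ℝ) := Nat.cast_nonneg m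
              nlinarith
      calc C ^ j * Lm ^ (m - j) * A ^ (j - 1)
          = (C ^ j * A ^ (j - 1)) * Lm ^ (m - j) := by ring
        _ ≤ ((1/2 : ℝ) ^ j * L3 ^ j) * Lm ^ (m - j) := by
            apply mul_le_mul_of_nonneg_right hstep1 (by positivity)
        _ = (1/2 : ℝ) ^ j * (Lm ^ (m - j) * L3 ^ j) := by ring
        _ ≤ (1/2 : ℝ) ^ j * Lm ^ ((m : ℝ) / 2 * ((j:ℝ) - 1)) :=
            mul_le_mul_of_nonneg_left hstep2 (by positivity)
    -- assemble
    have huv : u ≤ v := hu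
    calc C ^ j * Lj ^ (m - j) * u ^ j
        ≤ C ^ j * Lm ^ (m - j) * u ^ j := by
          apply mul_le_mul_of_nonneg_right _ (by positivity)
          exact mul_le_mul_of_nonneg_left (pow_le_pow_left₀ hLj0 hLjLm _) (by positivity)
      _ = C ^ j * Lm ^ (m - j) * (u ^ (j-1) * u) := by
          rw [← pow_succ]; congr 2; omega
      _ ≤ C ^ j * Lm ^ (m - j) * (v ^ (j-1) * u) := by
          apply mul_le_mul_of_nonneg_left _ (by positivity)
          exact mul_le_mul_of_nonneg_right (pow_le_pow_left₀ hu0 huv _) hu0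
      _ = (C ^ j * Lm ^ (m - j) * v ^ (j-1)) * u := by ring
      _ ≤ (1/2 : ℝ) ^ j * u := mul_le_mul_of_nonneg_right core hu0
  -- geometric sum bound
  have geo : ∑ j ∈ Finset.Icc 3 m, (1/2 : ℝ) ^ j ≤ 1 := by
    have hIcc : Finset.Icc 3 m = Finset.Ico 3 (m+1) := by
      rw [Finset.Ico_add_one_right_eq_Icc]
    rw [hIcc]
    calc ∑ j ∈ Finset.Ico 3 (m+1), (1/2 : ℝ) ^ j
        ≤ (1/2 : ℝ) ^ 3 / (1 - 1/2) :=
          geom_sum_Ico_le_of_lt_one (by norm_num) (by norm_num)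
      _ ≤ 1 := by norm_num
  have hsum : ∑ j ∈ Finset.Icc 3 m, C ^ j * (K * Real.log j) ^ (m - j) * u ^ j ≤ u := by
    calc ∑ j ∈ Finset.Icc 3 m, C ^ j * (K * Real.log j) ^ (m - j) * u ^ j
        ≤ ∑ j ∈ Finset.Icc 3 m, (1/2 : ℝ) ^ j * u := Finset.sum_le_sum key
      _ = (∑ j ∈ Finset.Icc 3 m, (1/2 : ℝ) ^ j) * u := by rw [Finset.sum_mul]
      _ ≤ 1 * u := mul_le_mul_of_nonneg_right geo hu0
      _ = u := one_mul u
  linarith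
end

section
/- Let P : ℝ≥0 → ℝ≥0 be a polynomial with nonnegative coefficients, P(t) = ∑_{n=0}^m J_n t^n, and suppose P(t) ≤ (1+t+t²)·N + 2tP(t) for all 0 ≤ t ≤ 1/4, where N ≥ 0. Then P(1/4) ≤ 4N and consequently J_n ≤ 4^{n+1} N for every 0 ≤ n ≤ m. -/
open Finset

theorem poly_functional_inequality (m : ℕ) (N : ℝ) (hN : 0 ≤ N) (J : ℕ → ℝ)
    (hJ : ∀ n, n ≤ m → 0 ≤ J n)
    (h : ∀ t : ℝ, 0 ≤ t → t ≤ 1 / 4 →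
      (∑ n ∈ Finset.range (m + 1), J n * t ^ n) ≤
        (1 + t + t ^ 2) * N + 2 * t * (∑ n ∈ Finset.range (m + 1), J n * t ^ n)) :
    (∑ n ∈ Finset.range (m + 1), J n * (1 / 4 : ℝ) ^ n) ≤ 4 * N ∧
    ∀ n, n ≤ m → J n ≤ 4 ^ (n + 1) * N := by
  have key := h (1/4) (by norm_num) (by norm_num)
  set S := ∑ n ∈ Finset.range (m + 1), J n * (1/4 : ℝ) ^ n with hS
  have hSle : S ≤ 4 * N := by nlinarith [key]
  refine ⟨hSle, fun n hn => ?_⟩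
  have hterm : J n * (1/4 : ℝ) ^ n ≤ S := by
    apply Finset.single_le_sum (f := fun k => J k * (1/4 : ℝ) ^ k)
    · intro k hk
      exact mul_nonneg (hJ k (Nat.lt_succ_iff.mp (Finset.mem_range.mp hk))) (by positivity)
    · exact Finset.mem_range.mpr (Nat.lt_succ_of_le hn)
  have h4 : (4:ℝ)^n * (1/4:ℝ)^n = 1 := by rw [← mul_pow]; norm_num
  have h4p : (0:ℝ) < (4:ℝ)^n := by positivity
  calc J n = 4^n * (J n * (1/4:ℝ)^n) := by rw [mul_comm (J n), ← mul_assoc, h4, one_mul]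
  _ ≤ 4^n * S := mul_le_mul_of_nonneg_left hterm h4p.le
  _ ≤ 4^n * (4*N) := mul_le_mul_of_nonneg_left hSle h4p.le
  _ = 4 ^ (n+1) * N := by ring
end

section
/- For every β > 0, q ≥ 2 with βq > 3, and every η ∈ ℝ, the function p ↦ (η² + 1 + |p|²)^{-β} on ℝ³ satisfies ‖(η² + E(·)²)^{-β}‖_{L^q(ℝ³)} ≤ (4π/(2βq - 3))^{1/q} (1+η²)^{(3/q - 2β)/2}, where E(p) = √(1+|p|²). -/
open Real MeasureTheory Set Filter

lemma radial_aux (a c : ℝ) (ha : 0 < a) (hc : 1 < c) :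
    (∫ x in Ioi (0:ℝ), x * (a + x ^ 2) ^ (-c)) = a ^ (1 - c) / (2 * (c - 1)) ∧
      IntegrableOn (fun x : ℝ => x * (a + x ^ 2) ^ (-c)) (Ioi 0) := by
  have hderiv : ∀ x ∈ Ici (0:ℝ),
      HasDerivAt (fun x : ℝ => -((a + x ^ 2) ^ (1 - c)) / (2 * (c - 1)))
        (x * (a + x ^ 2) ^ (-c)) x := by
    intro x _
    have hax : 0 < a + x ^ 2 := by positivity
    have h1 : HasDerivAt (fun x : ℝ => a + x ^ 2) (2 * x) x := by
      simpa using ((hasDerivAt_pow 2 x).const_add a)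
    have h2 := (Real.hasDerivAt_rpow_const (p := 1 - c) (Or.inl hax.ne')).comp x h1
    have h3 := (h2.neg).div_const (2 * (c - 1))
    refine h3.congr_deriv ?_
    have he : (1:ℝ) - c - 1 = -c := by ring
    have hne : c - 1 ≠ 0 := by linarith
    rw [he]
    field_simp
    ring
  have hpos : ∀ x ∈ Ioi (0:ℝ), 0 ≤ x * (a + x ^ 2) ^ (-c) := by
    intro x hx
    have : (0:ℝ) < x := hx
    positivity
  have htends : Tendsto (fun x : ℝ => -((a + x ^ 2) ^ (1 - c)) / (2 * (c - 1)))
      atTop (nhds 0) := by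
    have h1 : Tendsto (fun x : ℝ => a + x ^ 2) atTop atTop :=
      tendsto_atTop_add_const_left _ a (tendsto_pow_atTop two_ne_zero)
    have h2 : Tendsto (fun y : ℝ => y ^ (1 - c)) atTop (nhds 0) := by
      have := tendsto_rpow_neg_atTop (y := c - 1) (by linarith)
      simpa [neg_sub] using this
    have := ((h2.comp h1).neg).div_const (2 * (c - 1))
    simpa using this
  constructor
  · have := integral_Ioi_of_hasDerivAt_of_nonneg' hderiv hpos htends
    rw [this]
    ring
  · exact integrableOn_Ioi_deriv_of_nonneg' hderiv hpos htends

theorem f_beta_Lq_bound (β q η : ℝ) (hβ : 0 < β) (hq : 2 ≤ q) (hβq : 3 < β * q) :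
    (∫ p : EuclideanSpace ℝ (Fin 3), (η ^ 2 + 1 + ‖p‖ ^ 2) ^ (-(β * q))) ^ (1 / q)
      ≤ (4 * π / (2 * β * q - 3)) ^ (1 / q) * (1 + η ^ 2) ^ ((3 / q - 2 * β) / 2) := by
  have hq0 : (0:ℝ) < q := lt_of_lt_of_le two_pos hq
  set a : ℝ := η ^ 2 + 1 with ha_def
  have ha : 0 < a := by positivity
  set s : ℝ := β * q with hs_def
  have hs3 : 3 < s := hβq
  have hc : 1 < s - 1/2 := by linarith
  obtain ⟨hval, hint⟩ := radial_aux a (s - 1/2) ha hc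
  -- spherical coordinates
  have hsph := MeasureTheory.integral_fun_norm_addHaar
      (volume : Measure (EuclideanSpace ℝ (Fin 3))) (fun r : ℝ => (a + r ^ 2) ^ (-s))
  simp only [finrank_euclideanSpace_fin, smul_eq_mul, nsmul_eq_mul, Nat.cast_ofNat] at hsph
  norm_num at hsph
  -- volume of unit ball
  have hGamma : Real.Gamma ((3:ℝ)/2 + 1) = 3/4 * Real.sqrt π := by
    rw [Real.Gamma_add_one (by norm_num)]
    have h32 : (3:ℝ)/2 = 1/2 + 1 := by norm_num
    rw [h32, Real.Gamma_add_one (by norm_num), Real.Gamma_one_half_eq]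
    ring
  have hball : (volume (Metric.ball (0 : EuclideanSpace ℝ (Fin 3)) 1)).toReal = 4 * π / 3 := by
    rw [EuclideanSpace.volume_ball]
    have hcard : (Fintype.card (Fin 3) : ℝ) = 3 := by simp
    rw [Fintype.card_fin]
    have hsq : Real.sqrt π ^ 3 = π * Real.sqrt π := by
      rw [pow_succ, sq_sqrt pi_nonneg]
    have hX : Real.sqrt π ^ 3 / Real.Gamma ((3:ℕ) / 2 + 1) = 4 * π / 3 := by
      push_cast
      rw [hGamma, hsq]
      have hπ : Real.sqrt π ≠ 0 := by positivity
      field_simp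
    rw [ENNReal.toReal_mul, hX]
    simp [ENNReal.toReal_pow]
    positivity
  -- monotonicity of radial integral
  have hmono : (∫ y in Ioi (0:ℝ), y ^ 2 * (a + y ^ 2) ^ (-s))
      ≤ ∫ y in Ioi (0:ℝ), y * (a + y ^ 2) ^ (-(s - 1/2)) := by
    refine integral_mono_of_nonneg ?_ hint ?_
    · exact Eventually.of_forall fun y => by positivity
    · filter_upwards [ae_restrict_mem measurableSet_Ioi] with y hy
      have hy0 : (0:ℝ) < y := hy
      have hax : 0 < a + y ^ 2 := by positivity
      have hle : y ≤ Real.sqrt (a + y ^ 2) :=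
        (Real.le_sqrt hy0.le (by positivity)).mpr (by linarith)
      have hsqrt : Real.sqrt (a + y ^ 2) = (a + y ^ 2) ^ ((1:ℝ)/2) :=
        Real.sqrt_eq_rpow _
      calc y ^ 2 * (a + y ^ 2) ^ (-s) = y * (y * (a + y ^ 2) ^ (-s)) := by ring
        _ ≤ y * (Real.sqrt (a + y ^ 2) * (a + y ^ 2) ^ (-s)) := by
            apply mul_le_mul_of_nonneg_left _ hy0.le
            exact mul_le_mul_of_nonneg_right hle (Real.rpow_nonneg hax.le _)
        _ = y * (a + y ^ 2) ^ (-(s - 1/2)) := by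
            rw [hsqrt, ← Real.rpow_add hax]
            ring_nf
  -- combine
  have hbound : (∫ p : EuclideanSpace ℝ (Fin 3), (a + ‖p‖ ^ 2) ^ (-s))
      ≤ 4 * π / (2 * s - 3) * a ^ (3/2 - s) := by
    rw [hsph, measureReal_def, hball]
    have : a ^ (1 - (s - 1/2)) / (2 * (s - 1/2 - 1)) = a ^ (3/2 - s) / (2 * s - 3) := by
      rw [show (1:ℝ) - (s - 1/2) = 3/2 - s by ring, show 2 * (s - 1/2 - 1) = 2 * s - 3 by ring]
    calc (3:ℝ) * ((4 * π / 3) * ∫ y in Ioi (0:ℝ), y ^ 2 * (a + y ^ 2) ^ (-s))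
        ≤ 3 * ((4 * π / 3) * ∫ y in Ioi (0:ℝ), y * (a + y ^ 2) ^ (-(s - 1/2))) := by
          apply mul_le_mul_of_nonneg_left _ (by norm_num)
          exact mul_le_mul_of_nonneg_left hmono (by positivity)
      _ = 4 * π / (2 * s - 3) * a ^ (3/2 - s) := by
          rw [hval, this]
          simp only [div_eq_mul_inv]
          ring
  have hLHS_nonneg : 0 ≤ ∫ p : EuclideanSpace ℝ (Fin 3), (a + ‖p‖ ^ 2) ^ (-s) :=
    integral_nonneg fun p => Real.rpow_nonneg (by positivity) _
  have h1q : (0:ℝ) ≤ 1 / q := by positivity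
  have hden : (0:ℝ) < 2 * s - 3 := by linarith
  calc (∫ p : EuclideanSpace ℝ (Fin 3), (a + ‖p‖ ^ 2) ^ (-s)) ^ (1/q)
      ≤ (4 * π / (2 * s - 3) * a ^ (3/2 - s)) ^ (1/q) :=
        Real.rpow_le_rpow hLHS_nonneg hbound h1q
    _ = (4 * π / (2 * s - 3)) ^ (1/q) * (a ^ (3/2 - s)) ^ (1/q) :=
        Real.mul_rpow (by positivity) (Real.rpow_nonneg ha.le _)
    _ = (4 * π / (2 * β * q - 3)) ^ (1/q) * (1 + η ^ 2) ^ ((3/q - 2*β)/2) := by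
        rw [← Real.rpow_mul ha.le]
        have h1 : (3/2 - s) * (1/q) = (3/q - 2*β)/2 := by
          rw [hs_def]; field_simp
        have h2 : 2 * s - 3 = 2 * β * q - 3 := by rw [hs_def]; ring
        rw [h1, h2, ha_def, add_comm (η^2) 1]
end
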